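/- arXiv:2509.10669 — 4 statements merged into one kernel-verified Lean document; each statement's English description precedes it below -/
import Mathlib

section
/- Let f be a symmetric real-valued function on pairs of positive integers, n ≥ 4, i ∈ {1,2}, and let L¹ = (L¹_3, …, L¹_{n−1}, i) be a link vector attaining M_f(n,i). Then there exists a link vector L² ≠ L¹ with last entry i also attaining M_f(n,i) if and only if there exists j ∈ {3, …, n−1} such that n_t(j+1, L¹_{j+1}) = 1 + n_t(j,1) + n_t(j,2) (where L¹_{n} = i when j+1 = n). -/
noncomputable section
open Classical

/-- Constant term of a degree-based topological index on polyomino chains. -/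
def cst (f : ℕ → ℕ → ℝ) : ℝ := 4 * f 2 3 + 2 * f 2 2 + f 3 3

/-- `gone f i` is `g_f(i)`, the increment for the first link (n = 3). -/
def gone (f : ℕ → ℕ → ℝ) (i : ℕ) : ℝ :=
  if i = 1 then 3 * f 3 3 else 2 * f 3 4 + 2 * f 2 4 - f 3 3

/-- `gpair f i j` is `g_f(i,j)`, the increment for a link `j` after a link `i`. -/
def gpair (f : ℕ → ℕ → ℝ) (i j : ℕ) : ℝ :=
  if i = 1 then
    (if j = 1 then 3 * f 3 3 else 3 * f 3 4 + f 2 4 + f 2 3 - 2 * f 3 3)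
  else
    (if j = 1 then f 3 4 - f 2 4 + f 2 3 + 2 * f 3 3 else f 4 4 + 2 * f 2 4)

/-- Sum of `gpair` increments along a list of links, given the previous link. -/
def chainSum (f : ℕ → ℕ → ℝ) : ℕ → List ℕ → ℝ
  | _, [] => 0
  | a, b :: t => gpair f a b + chainSum f b t

/-- `TI f L` is the degree-based topological index of the polyomino chain with
link vector `L = [L_3, …, L_n]`. -/
def TI (f : ℕ → ℕ → ℝ) : List ℕ → ℝ
  | [] => cst f
  | a :: t => cst f + gone f a + chainSum f a t

/-- `ValidLinks n L` means `L` is a link vector of a polyomino chain with `n` squares: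
it has length `n - 2` and entries in `{1, 2}`. -/
def ValidLinks (n : ℕ) (L : List ℕ) : Prop :=
  L.length = n - 2 ∧ ∀ x ∈ L, x = 1 ∨ x = 2

/-- `Mmax f n i` is the maximum of `TI f` over link vectors of length `n - 2`
with last entry `i`. -/
def Mmax (f : ℕ → ℕ → ℝ) (n i : ℕ) : ℝ :=
  sSup {t : ℝ | ∃ L, ValidLinks n L ∧ L.getLast? = some i ∧ TI f L = t}

/-- `mMin f n i` is the minimum of `TI f` over link vectors of length `n - 2`
with last entry `i`. -/
def mMin (f : ℕ → ℕ → ℝ) (n i : ℕ) : ℝ :=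
  sInf {t : ℝ | ∃ L, ValidLinks n L ∧ L.getLast? = some i ∧ TI f L = t}

/-- The tie count `n_t(n, i)`. -/
def nt (f : ℕ → ℕ → ℝ) : ℕ → ℕ → ℕ
  | n + 4, i =>
    if Mmax f (n + 3) 1 + gpair f 1 i = Mmax f (n + 3) 2 + gpair f 2 i then
      1 + nt f (n + 3) 1 + nt f (n + 3) 2
    else if Mmax f (n + 3) 1 + gpair f 1 i > Mmax f (n + 3) 2 + gpair f 2 i then
      nt f (n + 3) 1
    else
      nt f (n + 3) 2
  | _, _ => 0

/-- The function defining the augmented Zagreb index: `f(x,y) = (xy/(x+y-2))³`. -/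
def fAZI : ℕ → ℕ → ℝ := fun x y => ((x * y : ℝ) / (x + y - 2)) ^ 3


section Helpers


lemma chainSum_concat (f : ℕ → ℕ → ℝ) (b : ℕ) : ∀ (t : List ℕ) (a : ℕ),
    chainSum f a (t ++ [b]) = chainSum f a t + gpair f ((a :: t).getLast (by simp)) b
  | [], a => by simp [chainSum, List.getLast]
  | c :: t, a => by
    show gpair f a c + chainSum f c (t ++ [b]) = gpair f a c + chainSum f c t + _
    rw [chainSum_concat f b t c, List.getLast_cons (by simp : (c :: t) ≠ [])]
    ring

lemma TI_concat (f : ℕ → ℕ → ℝ) {L : List ℕ} {a : ℕ} (h : L.getLast? = some a) (b : ℕ) :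
    TI f (L ++ [b]) = TI f L + gpair f a b := by
  cases L with
  | nil => simp at h
  | cons c t =>
    have ha : (c :: t).getLast (by simp) = a := by
      rw [List.getLast?_eq_getLast (by simp : c :: t ≠ [])] at h
      exact Option.some.inj h
    show cst f + gone f c + chainSum f c (t ++ [b]) = cst f + gone f c + chainSum f c t + _
    rw [chainSum_concat f b t c, ha]
    ring

def Sset (f : ℕ → ℕ → ℝ) (n i : ℕ) : Set ℝ :=
  {t : ℝ | ∃ L, ValidLinks n L ∧ L.getLast? = some i ∧ TI f L = t}

lemma Mmax_eq_sSup (f : ℕ → ℕ → ℝ) (n i : ℕ) : Mmax f n i = sSup (Sset f n i) := rfl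

lemma Sset_finite (f : ℕ → ℕ → ℝ) (n i : ℕ) : (Sset f n i).Finite := by
  apply Set.Finite.subset
    (Set.Finite.image (fun l : List Bool => TI f (l.map fun b => if b then 1 else 2))
      (List.finite_length_eq Bool (n - 2)))
  rintro t ⟨L, ⟨hlen, hmem⟩, -, rfl⟩
  refine ⟨L.map (fun x => decide (x = 1)), by simpa using hlen, ?_⟩
  simp only [List.map_map]
  congr 1
  conv_rhs => rw [← List.map_id L]
  apply List.map_congr_left
  intro x hx
  rcases hmem x hx with rfl | rfl <;> simp

lemma Sset_nonempty (f : ℕ → ℕ → ℝ) {n i : ℕ} (hn : 3 ≤ n) (hi : i = 1 ∨ i = 2) :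
    (Sset f n i).Nonempty := by
  refine ⟨_, List.replicate (n - 3) 1 ++ [i], ⟨?_, ?_⟩, List.getLast?_concat, rfl⟩
  · simp; omega
  · intro x hx
    rcases List.mem_append.1 hx with h' | h'
    · exact Or.inl (List.eq_of_mem_replicate h')
    · simp at h'; subst h'; exact hi

lemma le_Mmax (f : ℕ → ℕ → ℝ) {n i : ℕ} {L : List ℕ} (h1 : ValidLinks n L)
    (h2 : L.getLast? = some i) : TI f L ≤ Mmax f n i :=
  le_csSup (Sset_finite f n i).bddAbove ⟨L, h1, h2, rfl⟩

lemma exists_Mmax (f : ℕ → ℕ → ℝ) {n i : ℕ} (hn : 3 ≤ n) (hi : i = 1 ∨ i = 2) :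
    ∃ L, ValidLinks n L ∧ L.getLast? = some i ∧ TI f L = Mmax f n i :=
  (Sset_nonempty f hn hi).csSup_mem (Sset_finite f n i)

lemma valid_concat (f : ℕ → ℕ → ℝ) {n : ℕ} {L : List ℕ} {i : ℕ} (hn : 3 ≤ n)
    (h : ValidLinks n L) (hi : i = 1 ∨ i = 2) : ValidLinks (n + 1) (L ++ [i]) := by
  constructor
  · rw [List.length_append, h.1]; simp; omega
  · intro x hx
    rcases List.mem_append.1 hx with h' | h'
    · exact h.2 x h'
    · simp at h'; subst h'; exact hi

lemma split_valid (f : ℕ → ℕ → ℝ) {n : ℕ} {L : List ℕ} {i : ℕ} (hn : 3 ≤ n)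
    (h : ValidLinks (n + 1) L) (hl : L.getLast? = some i) :
    ∃ L' a, L = L' ++ [i] ∧ ValidLinks n L' ∧ L'.getLast? = some a ∧ (a = 1 ∨ a = 2) := by
  have hlen : L.length = n - 1 := by rw [h.1]; omega
  have hLne : L ≠ [] := by
    intro e; rw [e] at hlen; simp at hlen; omega
  have hgl : L.getLast hLne = i := by
    rw [List.getLast?_eq_getLast hLne] at hl; exact Option.some.inj hl
  have hlen' : L.dropLast.length = n - 2 := by
    rw [List.length_dropLast, hlen]; omega
  have hL'ne : L.dropLast ≠ [] := by
    intro e; rw [e] at hlen'; simp at hlen'; omega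
  have hsub : ∀ x ∈ L.dropLast, x = 1 ∨ x = 2 := fun x hx => h.2 x (List.dropLast_subset L hx)
  refine ⟨L.dropLast, L.dropLast.getLast hL'ne, ?_, ⟨hlen', hsub⟩,
    List.getLast?_eq_getLast hL'ne, hsub _ (List.getLast_mem hL'ne)⟩
  conv_lhs => rw [← List.dropLast_append_getLast hLne]
  rw [hgl]

lemma Mmax_ge (f : ℕ → ℕ → ℝ) {n i a : ℕ} (hn : 3 ≤ n) (hi : i = 1 ∨ i = 2)
    (ha : a = 1 ∨ a = 2) : Mmax f n a + gpair f a i ≤ Mmax f (n + 1) i := by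
  obtain ⟨L, hv, hl, hTI⟩ := exists_Mmax f hn ha
  have h1 := le_Mmax f (valid_concat f hn hv hi) List.getLast?_concat
  rw [TI_concat f hl i, hTI] at h1
  exact h1

lemma nt_tie_iff (f : ℕ → ℕ → ℝ) {n i : ℕ} (hn : 3 ≤ n) :
    (nt f (n + 1) i = 1 + nt f n 1 + nt f n 2) ↔
      Mmax f n 1 + gpair f 1 i = Mmax f n 2 + gpair f 2 i := by
  obtain ⟨m, rfl⟩ : ∃ m, n = m + 3 := ⟨n - 3, by omega⟩
  show nt f (m + 4) i = _ ↔ _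
  rw [nt]
  split_ifs with h1 h2
  · exact ⟨fun _ => h1, fun _ => rfl⟩
  · exact ⟨fun h => by omega, fun h => absurd h h1⟩
  · exact ⟨fun h => by omega, fun h => absurd h h1⟩

lemma eq_singleton_of_len1 {L : List ℕ} {i : ℕ} (h1 : L.length = 1)
    (h2 : L.getLast? = some i) : L = [i] := by
  cases L with
  | nil => simp at h1
  | cons a t =>
    have : t = [] := by simpa using h1
    subst this
    simp [List.getLast?] at h2
    rw [h2]

lemma main_lemma (f : ℕ → ℕ → ℝ) : ∀ n, 3 ≤ n → ∀ i, (i = 1 ∨ i = 2) →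
    ∀ L1 : List ℕ, ValidLinks n L1 → L1.getLast? = some i → TI f L1 = Mmax f n i →
    ((∃ L2, L2 ≠ L1 ∧ ValidLinks n L2 ∧ L2.getLast? = some i ∧ TI f L2 = Mmax f n i)
      ↔ (∃ j, 3 ≤ j ∧ j ≤ n - 1 ∧
          nt f (j + 1) (L1.getD (j + 1 - 3) 1) = 1 + nt f j 1 + nt f j 2)) := by
  intro n hn
  induction n, hn using Nat.le_induction with
  | base =>
    intro i hi L1 hL1 hlast hmax
    constructor
    · rintro ⟨L2, hne, ⟨hlen2, -⟩, hlast2, -⟩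
      exact absurd ((eq_singleton_of_len1 hlen2 hlast2).trans
        (eq_singleton_of_len1 hL1.1 hlast).symm) hne
    · rintro ⟨j, h3, h2, -⟩; omega
  | succ n hn IH =>
    intro i hi L1 hL1 hlast hmax
    obtain ⟨L1', a, rfl, hv', hlast', ha⟩ := split_valid f hn hL1 hlast
    have hTI1 : TI f (L1' ++ [i]) = TI f L1' + gpair f a i := TI_concat f hlast' i
    have hub : TI f L1' ≤ Mmax f n a := le_Mmax f hv' hlast'
    have hge : Mmax f n a + gpair f a i ≤ Mmax f (n + 1) i := Mmax_ge f hn hi ha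
    have h1 : TI f L1' = Mmax f n a := by
      rw [hTI1] at hmax; linarith
    have hMeq : Mmax f (n + 1) i = Mmax f n a + gpair f a i := by
      rw [← hmax, hTI1, h1]
    have key : (∃ L2, L2 ≠ L1' ++ [i] ∧ ValidLinks (n + 1) L2 ∧ L2.getLast? = some i ∧
          TI f L2 = Mmax f (n + 1) i)
        ↔ ((∃ L2', L2' ≠ L1' ∧ ValidLinks n L2' ∧ L2'.getLast? = some a ∧
            TI f L2' = Mmax f n a)
          ∨ Mmax f n 1 + gpair f 1 i = Mmax f n 2 + gpair f 2 i) := by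
      constructor
      · rintro ⟨L2, hne, hv2, hl2, hTI2⟩
        obtain ⟨L2', b, rfl, hv2', hlast2', hb⟩ := split_valid f hn hv2 hl2
        have hTI2' : TI f L2' + gpair f b i = Mmax f (n + 1) i := by
          rw [← TI_concat f hlast2' i, hTI2]
        have hub2 : TI f L2' ≤ Mmax f n b := le_Mmax f hv2' hlast2'
        have hge2 : Mmax f n b + gpair f b i ≤ Mmax f (n + 1) i := Mmax_ge f hn hi hb
        have h2 : TI f L2' = Mmax f n b := by linarith
        have hMeq2 : Mmax f n b + gpair f b i = Mmax f n a + gpair f a i := by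
          rw [← h2, hTI2', hMeq]
        by_cases hab : b = a
        · subst hab
          left
          exact ⟨L2', fun e => hne (by rw [e]), hv2', hlast2', h2⟩
        · right
          rcases ha with rfl | rfl <;> rcases hb with rfl | rfl
          · exact absurd rfl hab
          · exact hMeq2.symm
          · exact hMeq2
          · exact absurd rfl hab
      · rintro (⟨L2', hne, hv2', hl2', hTI2'⟩ | htie)
        · refine ⟨L2' ++ [i], ?_, valid_concat f hn hv2' hi, List.getLast?_concat, ?_⟩
          · intro e; exact hne (List.append_cancel_right e)
          · rw [TI_concat f hl2' i, hTI2', hMeq]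
        · obtain ⟨b, hb, hba, htie'⟩ : ∃ b, (b = 1 ∨ b = 2) ∧ b ≠ a ∧
              Mmax f n b + gpair f b i = Mmax f n a + gpair f a i := by
            rcases ha with rfl | rfl
            · exact ⟨2, Or.inr rfl, by omega, htie.symm⟩
            · exact ⟨1, Or.inl rfl, by omega, htie⟩
          obtain ⟨L2', hv2', hl2', hTI2'⟩ := exists_Mmax f hn hb
          refine ⟨L2' ++ [i], ?_, valid_concat f hn hv2' hi, List.getLast?_concat, ?_⟩
          · intro e
            have hLL : L2' = L1' := List.append_cancel_right e
            rw [hLL, hlast'] at hl2'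
            exact hba (Option.some.inj hl2'.symm)
          · rw [TI_concat f hl2' i, hTI2', htie', hMeq]
    have hlen1' : L1'.length = n - 2 := hv'.1
    have hgetlast : (L1' ++ [i]).getD (n + 1 - 3) 1 = i := by
      rw [List.getD_append_right _ _ _ _ (by omega)]
      rw [hlen1']
      have : n + 1 - 3 - (n - 2) = 0 := by omega
      rw [this]
      rfl
    have rhs : (∃ j, 3 ≤ j ∧ j ≤ (n + 1) - 1 ∧
          nt f (j + 1) ((L1' ++ [i]).getD (j + 1 - 3) 1) = 1 + nt f j 1 + nt f j 2)
        ↔ ((∃ j, 3 ≤ j ∧ j ≤ n - 1 ∧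
            nt f (j + 1) (L1'.getD (j + 1 - 3) 1) = 1 + nt f j 1 + nt f j 2)
          ∨ nt f (n + 1) i = 1 + nt f n 1 + nt f n 2) := by
      constructor
      · rintro ⟨j, h3, hj, heq⟩
        rcases eq_or_lt_of_le (show j ≤ n by omega) with rfl | hlt
        · right; rwa [hgetlast] at heq
        · left
          rw [List.getD_append _ _ _ _ (by omega)] at heq
          exact ⟨j, h3, by omega, heq⟩
      · rintro (⟨j, h3, hj, heq⟩ | heq)
        · refine ⟨j, h3, by omega, ?_⟩
          rwa [List.getD_append _ _ _ _ (by omega)]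
        · exact ⟨n, hn, by omega, by rwa [hgetlast]⟩
    rw [key, rhs]
    exact or_congr (IH a ha L1' hv' hlast' h1) (nt_tie_iff f hn).symm

end Helpers

/-- a maximizing link vector for `M_f(n,i)` is non-unique iff a tie
occurs along it.  Here `L¹_{j+1}` is `L1.getD (j + 1 - 3) 1`. -/
theorem stmt4 (f : ℕ → ℕ → ℝ) (hsym : ∀ x y, f x y = f y x)
    (n : ℕ) (hn : 4 ≤ n) (i : ℕ) (hi : i = 1 ∨ i = 2)
    (L1 : List ℕ) (hL1 : ValidLinks n L1) (hlast : L1.getLast? = some i)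
    (hmax : TI f L1 = Mmax f n i) :
    (∃ L2, L2 ≠ L1 ∧ ValidLinks n L2 ∧ L2.getLast? = some i ∧ TI f L2 = Mmax f n i)
    ↔ (∃ j, 3 ≤ j ∧ j ≤ n - 1 ∧
        nt f (j + 1) (L1.getD (j + 1 - 3) 1) = 1 + nt f j 1 + nt f j 2) := by
  exact main_lemma f n (by omega) i hi L1 hL1 hlast hmax

end
end

section
/- Let f be a symmetric real-valued function on pairs of positive integers such that g_f(1,1) > max{ g_f(1,2), g_f(2,2), (g_f(1,2) + g_f(2,1))/2 } and g_f(1,1) < g_f(2), and set n* = ⌈ (g_f(2) − g_f(1,1))/(g_f(1,1) − g_f(2,2)) + 3 ⌉. Then for n = n*, the all-ones link vector (the linear chain Li_n) attains the maximum of TI_f among all link vectors in {1,2}^{n−2}; and for every n > n*, the all-ones link vector is the unique maximizer of TI_f among all link vectors in {1,2}^{n−2}. -/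
noncomputable section
open Classical

lemma gone_one' (f : ℕ → ℕ → ℝ) : gone f 1 = gpair f 1 1 := by
  simp [gone, gpair]

lemma key_id' (f : ℕ → ℕ → ℝ) :
    gone f 2 + gpair f 2 1 = gpair f 1 1 + gpair f 1 2 := by
  simp [gone, gpair]; ring

lemma csum_rep' (f : ℕ → ℕ → ℝ) (m : ℕ) :
    chainSum f 1 (List.replicate m 1) = m * gpair f 1 1 := by
  induction m with
  | zero => simp [chainSum]
  | succ k ih =>
    rw [List.replicate_succ]
    show gpair f 1 1 + chainSum f 1 (List.replicate k 1) = _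
    rw [ih]; push_cast; ring

lemma TI_rep' (f : ℕ → ℕ → ℝ) (m : ℕ) :
    TI f (List.replicate m 1) = cst f + m * gpair f 1 1 := by
  cases m with
  | zero => simp [TI]
  | succ k =>
    rw [List.replicate_succ]
    show cst f + gone f 1 + chainSum f 1 (List.replicate k 1) = _
    rw [csum_rep', gone_one']; push_cast; ring

lemma chain_bounds' (f : ℕ → ℕ → ℝ)
    (hba : gpair f 1 2 < gpair f 1 1)
    (hda : gpair f 2 2 < gpair f 1 1)
    (hbc : gpair f 1 2 + gpair f 2 1 < 2 * gpair f 1 1) :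
    ∀ t : List ℕ, (∀ x ∈ t, x = 1 ∨ x = 2) →
      (chainSum f 1 t ≤ t.length * gpair f 1 1) ∧
      (2 ∈ t → chainSum f 1 t < t.length * gpair f 1 1) ∧
      (chainSum f 2 t ≤ t.length * gpair f 1 1 +
        max ((t.length : ℝ) * (gpair f 2 2 - gpair f 1 1)) (gpair f 2 1 - gpair f 1 1)) := by
  intro t
  induction t with
  | nil =>
    intro _
    refine ⟨by simp [chainSum], by simp, ?_⟩
    simpa [chainSum] using le_max_left (0:ℝ) (gpair f 2 1 - gpair f 1 1)
  | cons x s ih =>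
    intro h
    have hs : ∀ y ∈ s, y = 1 ∨ y = 2 := fun y hy => h y (List.mem_cons_of_mem _ hy)
    obtain ⟨ih1, ih2, ih3⟩ := ih hs
    have hx := h x List.mem_cons_self
    have hlen : ((x :: s).length : ℝ) = (s.length : ℝ) + 1 := by push_cast [List.length_cons]; ring
    rcases hx with rfl | rfl
    · -- x = 1
      have e1 : chainSum f 1 (1 :: s) = gpair f 1 1 + chainSum f 1 s := rfl
      have e2 : chainSum f 2 (1 :: s) = gpair f 2 1 + chainSum f 1 s := rfl
      refine ⟨?_, ?_, ?_⟩
      · rw [e1, hlen]; linarith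
      · intro h2
        have h2s : 2 ∈ s := by
          rcases List.mem_cons.mp h2 with h | h
          · omega
          · exact h
        rw [e1, hlen]; linarith [ih2 h2s]
      · rw [e2, hlen]
        have := le_max_right ((((s.length:ℝ))+1) * (gpair f 2 2 - gpair f 1 1)) (gpair f 2 1 - gpair f 1 1)
        linarith
    · -- x = 2
      have e1 : chainSum f 1 (2 :: s) = gpair f 1 2 + chainSum f 2 s := rfl
      have e2 : chainSum f 2 (2 :: s) = gpair f 2 2 + chainSum f 2 s := rfl
      have hu : (s.length : ℝ) * (gpair f 2 2 - gpair f 1 1) ≤ 0 :=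
        mul_nonpos_of_nonneg_of_nonpos (by positivity) (by linarith)
      have hmax_lt : max ((s.length : ℝ) * (gpair f 2 2 - gpair f 1 1)) (gpair f 2 1 - gpair f 1 1)
          < gpair f 1 1 - gpair f 1 2 := max_lt (by linarith) (by linarith)
      have hstrict : chainSum f 1 (2 :: s) < (↑(2::s).length) * gpair f 1 1 := by
        rw [e1, hlen]; linarith
      refine ⟨le_of_lt hstrict, fun _ => hstrict, ?_⟩
      · rw [e2, hlen]
        rcases max_cases ((s.length : ℝ) * (gpair f 2 2 - gpair f 1 1)) (gpair f 2 1 - gpair f 1 1)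
          with ⟨hM, _⟩ | ⟨hM, _⟩ <;> rw [hM] at ih3
        · have := le_max_left (((s.length:ℝ)+1) * (gpair f 2 2 - gpair f 1 1)) (gpair f 2 1 - gpair f 1 1)
          nlinarith
        · have := le_max_right (((s.length:ℝ)+1) * (gpair f 2 2 - gpair f 1 1)) (gpair f 2 1 - gpair f 1 1)
          linarith

lemma main_bound' (f : ℕ → ℕ → ℝ)
    (hba : gpair f 1 2 < gpair f 1 1)
    (hda : gpair f 2 2 < gpair f 1 1)
    (hbc : gpair f 1 2 + gpair f 2 1 < 2 * gpair f 1 1)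
    (n : ℕ) (hn4 : 4 ≤ n)
    (hstar : gone f 2 - gpair f 1 1 ≤ ((n:ℝ) - 3) * (gpair f 1 1 - gpair f 2 2))
    (L : List ℕ) (hL : ValidLinks n L) :
    TI f L ≤ TI f (List.replicate (n-2) 1) ∧
    (gone f 2 - gpair f 1 1 < ((n:ℝ) - 3) * (gpair f 1 1 - gpair f 2 2) →
      L ≠ List.replicate (n-2) 1 → TI f L < TI f (List.replicate (n-2) 1)) := by
  obtain ⟨hlen, hmem⟩ := hL
  have hkey := key_id' f
  match L, hlen with
  | [], hlen => simp [List.length] at hlen; omega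
  | x :: t, hlen =>
    have hx := hmem x List.mem_cons_self
    have hmemt : ∀ y ∈ t, y = 1 ∨ y = 2 := fun y hy => hmem y (List.mem_cons_of_mem _ hy)
    have htl : t.length = n - 3 := by
      simp [List.length_cons] at hlen; omega
    have htlr : (t.length : ℝ) = (n:ℝ) - 3 := by
      rw [htl]; push_cast [Nat.cast_sub (by omega : 3 ≤ n)]; ring
    have hrep : TI f (List.replicate (n-2) 1) = cst f + ((n:ℝ) - 2) * gpair f 1 1 := by
      rw [TI_rep']
      have : ((n-2 : ℕ) : ℝ) = (n:ℝ) - 2 := by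
        push_cast [Nat.cast_sub (by omega : 2 ≤ n)]; ring
      rw [this]
    obtain ⟨cb1, cb2, cb3⟩ := chain_bounds' f hba hda hbc t hmemt
    rw [htlr] at cb1 cb2 cb3
    rcases hx with rfl | rfl
    · -- first link is 1
      have eTI : TI f (1 :: t) = cst f + gpair f 1 1 + chainSum f 1 t := by
        show cst f + gone f 1 + chainSum f 1 t = _
        rw [gone_one']
      constructor
      · rw [eTI, hrep]; linarith
      · intro _ hne
        have h2t : 2 ∈ t := by
          by_contra h2
          apply hne
          have : t = List.replicate t.length 1 := by
            rw [List.eq_replicate_iff]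
            exact ⟨rfl, fun b hb => (hmemt b hb).resolve_right (by rintro rfl; exact h2 hb)⟩
          rw [this, htl]
          have : n - 2 = (n - 3) + 1 := by omega
          rw [this, List.replicate_succ]
        rw [eTI, hrep]; linarith [cb2 h2t]
    · -- first link is 2
      have eTI : TI f (2 :: t) = cst f + gone f 2 + chainSum f 2 t := rfl
      have hc : gpair f 2 1 - gpair f 1 1 ≤ gpair f 1 1 - gone f 2 := by linarith
      constructor
      · have hmle : max (((n:ℝ) - 3) * (gpair f 2 2 - gpair f 1 1)) (gpair f 2 1 - gpair f 1 1)
            ≤ gpair f 1 1 - gone f 2 := by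
          apply max_le _ hc
          nlinarith
        rw [eTI, hrep]; linarith
      · intro hstrict _
        have hmlt : max (((n:ℝ) - 3) * (gpair f 2 2 - gpair f 1 1)) (gpair f 2 1 - gpair f 1 1)
            < gpair f 1 1 - gone f 2 := by
          apply max_lt _ (by linarith)
          nlinarith
        rw [eTI, hrep]; linarith

/-- if `g_f(1,1)` dominates and `g_f(1,1) < g_f(2)`, then at
`n = n*` the linear chain attains the maximum, and for `n > n*` it is the
unique maximizer. -/
theorem stmt10 (f : ℕ → ℕ → ℝ) (hsym : ∀ x y, f x y = f y x)
    (hdom : gpair f 1 1 > max (max (gpair f 1 2) (gpair f 2 2)) ((gpair f 1 2 + gpair f 2 1) / 2))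
    (hg : gpair f 1 1 < gone f 2) :
    (∀ n : ℕ, (n : ℤ) = ⌈(gone f 2 - gpair f 1 1) / (gpair f 1 1 - gpair f 2 2) + 3⌉ →
      ∀ L, ValidLinks n L → TI f L ≤ TI f (List.replicate (n - 2) 1)) ∧
    (∀ n : ℕ, (n : ℤ) > ⌈(gone f 2 - gpair f 1 1) / (gpair f 1 1 - gpair f 2 2) + 3⌉ →
      ∀ L, ValidLinks n L → L ≠ List.replicate (n - 2) 1 →
        TI f L < TI f (List.replicate (n - 2) 1)) := by
  obtain ⟨h12, h3⟩ := max_lt_iff.mp hdom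
  obtain ⟨hba, hda⟩ := max_lt_iff.mp h12
  have hbc : gpair f 1 2 + gpair f 2 1 < 2 * gpair f 1 1 := by linarith
  set r : ℝ := (gone f 2 - gpair f 1 1) / (gpair f 1 1 - gpair f 2 2) with hr
  have had : (0:ℝ) < gpair f 1 1 - gpair f 2 2 := by linarith
  have hrpos : 0 < r := div_pos (by linarith) had
  have hceil4 : (3 : ℤ) < ⌈r + 3⌉ := Int.lt_ceil.mpr (by push_cast; linarith)
  constructor
  · intro n hn L hL
    have hn4 : 4 ≤ n := by omega
    have hle : r + 3 ≤ (n : ℝ) := by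
      have h1 : r + 3 ≤ ((⌈r + 3⌉ : ℤ) : ℝ) := Int.le_ceil _
      have h2 : ((n : ℤ) : ℝ) = ((⌈r + 3⌉ : ℤ) : ℝ) := by rw [hn]
      push_cast at h2; linarith
    have hstar : gone f 2 - gpair f 1 1 ≤ ((n:ℝ) - 3) * (gpair f 1 1 - gpair f 2 2) := by
      have : r ≤ (n:ℝ) - 3 := by linarith
      rw [hr, div_le_iff₀ had] at this; linarith
    exact (main_bound' f hba hda hbc n hn4 hstar L hL).1
  · intro n hn L hL hne
    have hn4 : 4 ≤ n := by omega
    have hlt : r + 3 < (n : ℝ) := by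
      have h1 : r + 3 ≤ ((⌈r + 3⌉ : ℤ) : ℝ) := Int.le_ceil _
      have h2 : ((⌈r + 3⌉ : ℤ) : ℝ) + 1 ≤ ((n : ℤ) : ℝ) := by exact_mod_cast hn
      push_cast at h2; linarith
    have hstar : gone f 2 - gpair f 1 1 < ((n:ℝ) - 3) * (gpair f 1 1 - gpair f 2 2) := by
      have : r < (n:ℝ) - 3 := by linarith
      rw [hr, div_lt_iff₀ had] at this; linarith
    exact (main_bound' f hba hda hbc n hn4 (le_of_lt hstar) L hL).2 hstar hne

end
end

section
/- Let f be a symmetric real-valued function on pairs of positive integers satisfying g_f(1,1) > max{ g_f(1,2), g_f(2,2), (g_f(1,2) + g_f(2,1))/2 }. If for some n ≥ 4 one has M_f(n−1,1) + g_f(1,1) ≥ M_f(n−1,2) + g_f(2,1), then M_f(n,1) + g_f(1,1) > M_f(n,2) + g_f(2,1). -/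
noncomputable section
open Classical

def Tset (f : ℕ → ℕ → ℝ) (n i : ℕ) : Set ℝ :=
  {t : ℝ | ∃ L, ValidLinks n L ∧ L.getLast? = some i ∧ TI f L = t}

lemma chainSum_append (f : ℕ → ℕ → ℝ) :
    ∀ (t : List ℕ) (a c : ℕ),
      chainSum f a (t ++ [c]) = chainSum f a t + gpair f (t.getLastD a) c := by
  intro t
  induction t with
  | nil => intro a c; simp [chainSum]
  | cons b t ih =>
      intro a c
      show gpair f a b + chainSum f b (t ++ [c]) = _
      rw [ih b c, List.getLastD_cons, chainSum]
      ring

lemma TI_append (f : ℕ → ℕ → ℝ) (L : List ℕ) (j c : ℕ) (h : L.getLast? = some j) :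
    TI f (L ++ [c]) = TI f L + gpair f j c := by
  cases L with
  | nil => simp at h
  | cons a t =>
      have hj : t.getLastD a = j := by
        rw [List.getLast?_cons] at h
        rw [List.getLastD_eq_getLast?]
        simpa using h
      simp only [List.cons_append, TI, chainSum_append, hj]
      ring

lemma Tset_finite (f : ℕ → ℕ → ℝ) (n i : ℕ) : (Tset f n i).Finite := by
  have : Tset f n i ⊆
      (fun l : List Bool => TI f (l.map (fun b => if b then 1 else 2))) ''
        {l : List Bool | l.length = n - 2} := by
    rintro t ⟨L, ⟨hlen, hmem⟩, _, rfl⟩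
    refine ⟨L.map (fun x => x = 1), by simpa using hlen, ?_⟩
    show TI f _ = TI f L
    congr 1
    rw [List.map_map]
    refine List.map_congr_left ?_ |>.trans L.map_id
    intro x hx
    rcases hmem x hx with rfl | rfl <;> simp
  exact Set.Finite.subset ((List.finite_length_eq Bool (n - 2)).image _) this

lemma Tset_nonempty (f : ℕ → ℕ → ℝ) (n i : ℕ) (hn : 3 ≤ n) (hi : i = 1 ∨ i = 2) :
    (Tset f n i).Nonempty := by
  refine ⟨TI f (List.replicate (n - 3) 1 ++ [i]), List.replicate (n - 3) 1 ++ [i], ⟨?_, ?_⟩, ?_, rfl⟩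
  · simp; omega
  · intro x hx; simp at hx
    rcases hx with h | h
    · left; exact h.2
    · rw [h]; exact hi
  · simp

lemma le_Mmax_s12 (f : ℕ → ℕ → ℝ) (n i : ℕ) {t : ℝ} (ht : t ∈ Tset f n i) : t ≤ Mmax f n i :=
  le_csSup (Tset_finite f n i).bddAbove ht

lemma Mmax_mem (f : ℕ → ℕ → ℝ) (n i : ℕ) (hn : 3 ≤ n) (hi : i = 1 ∨ i = 2) :
    Mmax f n i ∈ Tset f n i :=
  (Tset_nonempty f n i hn hi).csSup_mem (Tset_finite f n i)

lemma Mmax_ge_step (f : ℕ → ℕ → ℝ) (n j i : ℕ) (hn : 4 ≤ n)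
    (hj : j = 1 ∨ j = 2) (hi : i = 1 ∨ i = 2) :
    Mmax f (n - 1) j + gpair f j i ≤ Mmax f n i := by
  obtain ⟨L, ⟨hlen, hmem⟩, hlast, hTI⟩ := Mmax_mem f (n - 1) j (by omega) hj
  refine le_Mmax_s12 f n i ⟨L ++ [i], ⟨?_, ?_⟩, ?_, ?_⟩
  · simp [hlen]; omega
  · intro x hx; simp at hx
    rcases hx with h | h
    · exact hmem x h
    · rw [h]; exact hi
  · simp
  · rw [TI_append f L j i hlast, hTI]

lemma Mmax_le_step (f : ℕ → ℕ → ℝ) (n i : ℕ) (hn : 4 ≤ n) (hi : i = 1 ∨ i = 2) :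
    Mmax f n i ≤ max (Mmax f (n - 1) 1 + gpair f 1 i) (Mmax f (n - 1) 2 + gpair f 2 i) := by
  obtain ⟨L, ⟨hlen, hmem⟩, hlast, hTI⟩ := Mmax_mem f n i (by omega) hi
  obtain ⟨D, rfl⟩ := List.getLast?_eq_some_iff.mp hlast
  have hD : D ≠ [] := by
    rintro rfl; simp at hlen; omega
  obtain ⟨j, hjl⟩ : ∃ j, D.getLast? = some j := ⟨D.getLast hD, List.getLast?_eq_getLast hD⟩
  have hjD : j ∈ D := by
    obtain ⟨ys, rfl⟩ := List.getLast?_eq_some_iff.mp hjl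
    simp
  have hDvalid : ValidLinks (n - 1) D := by
    constructor
    · have : D.length + 1 = n - 2 := by simpa using hlen
      omega
    · intro x hx; exact hmem x (by simp [hx])
  have hmemT : TI f D ∈ Tset f (n - 1) j := ⟨D, hDvalid, hjl, rfl⟩
  have hle : TI f D ≤ Mmax f (n - 1) j := le_Mmax_s12 f (n - 1) j hmemT
  rw [← hTI, TI_append f D j i hjl]
  rcases hmem j (by simp [hjD]) with rfl | rfl
  · exact le_max_of_le_left (by linarith)
  · exact le_max_of_le_right (by linarith)


/-- under the domination hypothesis, the inequality
`M_f(n-1,1) + g_f(1,1) ≥ M_f(n-1,2) + g_f(2,1)` propagates strictly. -/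
theorem stmt12 (f : ℕ → ℕ → ℝ) (hsym : ∀ x y, f x y = f y x)
    (hdom : gpair f 1 1 > max (max (gpair f 1 2) (gpair f 2 2)) ((gpair f 1 2 + gpair f 2 1) / 2))
    (n : ℕ) (hn : 4 ≤ n)
    (h : Mmax f (n - 1) 1 + gpair f 1 1 ≥ Mmax f (n - 1) 2 + gpair f 2 1) :
    Mmax f n 1 + gpair f 1 1 > Mmax f n 2 + gpair f 2 1 := by
  have h11 : Mmax f (n - 1) 1 + gpair f 1 1 ≤ Mmax f n 1 :=
    Mmax_ge_step f n 1 1 hn (Or.inl rfl) (Or.inl rfl)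
  have h2 : Mmax f n 2 ≤ max (Mmax f (n - 1) 1 + gpair f 1 2) (Mmax f (n - 1) 2 + gpair f 2 2) :=
    Mmax_le_step f n 2 hn (Or.inr rfl)
  have hd1 : gpair f 1 1 > gpair f 1 2 := lt_of_le_of_lt (le_max_of_le_left (le_max_left _ _)) hdom
  have hd2 : gpair f 1 1 > gpair f 2 2 := lt_of_le_of_lt (le_max_of_le_left (le_max_right _ _)) hdom
  have hd3 : gpair f 1 1 > (gpair f 1 2 + gpair f 2 1) / 2 :=
    lt_of_le_of_lt (le_max_right _ _) hdom
  rcases max_cases (Mmax f (n - 1) 1 + gpair f 1 2) (Mmax f (n - 1) 2 + gpair f 2 2) with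
    ⟨heq, _⟩ | ⟨heq, _⟩ <;> rw [heq] at h2 <;> nlinarith


end
end

section
/- For the augmented Zagreb index (f(x,y) = (xy/(x+y−2))³) and every odd n ≥ 5, the unique maximizer of TI_f among all link vectors L = (L_3, …, L_n) ∈ {1,2}^{n−2} is the alternating vector with L_j = 1 for odd j and L_j = 2 for even j (that is, the vector (1, 2, 1, 2, …, 2, 1)); this is the link vector of the augmented zigzag AZ¹_{(n−1)/2}, whose (n−1)/2 segments all have length 3. -/
noncomputable section
open Classical

/-- potential value -/
def potv : ℝ := 3829/4000
def wv : ℝ := 4456/125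
def pot (i : ℕ) : ℝ := if i = 1 then 0 else potv

lemma pot_nonneg (i : ℕ) : 0 ≤ pot i := by
  unfold pot potv; split <;> norm_num

def flp (a : ℕ) : ℕ := if a = 1 then 2 else 1

def flpAlt : ℕ → ℕ → List ℕ
  | _, 0 => []
  | a, k+1 => flp a :: flpAlt (flp a) k

def myLast : ℕ → List ℕ → ℕ
  | a, [] => a
  | _, b :: T => myLast b T

lemma flp_mem {a : ℕ} (h : a = 1 ∨ a = 2) : flp a = 1 ∨ flp a = 2 := by
  rcases h with rfl | rfl <;> simp [flp]

lemma flp_flp {a : ℕ} (h : a = 1 ∨ a = 2) : flp (flp a) = a := by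
  rcases h with rfl | rfl <;> simp [flp]

lemma g11 : gpair fAZI 1 1 = 2187/64 := by norm_num [gpair, fAZI]
lemma g12 : gpair fAZI 1 2 = 138763/4000 := by norm_num [gpair, fAZI]
lemma g21 : gpair fAZI 2 1 = 146421/4000 := by norm_num [gpair, fAZI]
lemma g22 : gpair fAZI 2 2 = 944/27 := by norm_num [gpair, fAZI]
lemma gone1 : gone fAZI 1 = 2187/64 := by norm_num [gone, fAZI]
lemma gone2 : gone fAZI 2 = 3456/125 + 16 - 729/64 := by norm_num [gone, fAZI]

lemma key_eq {a : ℕ} (h : a = 1 ∨ a = 2) :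
    gpair fAZI a (flp a) + pot (flp a) = wv + pot a := by
  rcases h with rfl | rfl <;>
    simp [flp, pot, potv, wv, g12, g21] <;> norm_num

lemma key_lt {a : ℕ} (h : a = 1 ∨ a = 2) :
    gpair fAZI a a + pot a < wv + pot a := by
  rcases h with rfl | rfl <;>
    simp [pot, potv, wv, g11, g22] <;> norm_num

lemma chain_le : ∀ (L : List ℕ) (a : ℕ), (a = 1 ∨ a = 2) → (∀ x ∈ L, x = 1 ∨ x = 2) →
    chainSum fAZI a L + pot (myLast a L) ≤ L.length * wv + pot a := by
  intro L
  induction L with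
  | nil => intro a _ _; simp [chainSum, myLast]
  | cons b T ih =>
    intro a ha hmem
    have hb : b = 1 ∨ b = 2 := hmem b (by simp)
    have hT : ∀ x ∈ T, x = 1 ∨ x = 2 := fun x hx => hmem x (by simp [hx])
    have h1 : gpair fAZI a b + pot b ≤ wv + pot a := by
      by_cases hfb : b = flp a
      · subst hfb; exact le_of_eq (key_eq ha)
      · have hba : b = a := by
          rcases ha with rfl | rfl <;> rcases hb with rfl | rfl <;> simp_all [flp]
        subst hba; exact le_of_lt (key_lt ha)
    have h2 := ih b hb hT
    simp only [chainSum, myLast, List.length_cons]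
    push_cast
    linarith

lemma chain_lt : ∀ (L : List ℕ) (a : ℕ), (a = 1 ∨ a = 2) → (∀ x ∈ L, x = 1 ∨ x = 2) →
    L ≠ flpAlt a L.length →
    chainSum fAZI a L + pot (myLast a L) < L.length * wv + pot a := by
  intro L
  induction L with
  | nil => intro a _ _ hne; simp [flpAlt] at hne
  | cons b T ih =>
    intro a ha hmem hne
    have hb : b = 1 ∨ b = 2 := hmem b (by simp)
    have hT : ∀ x ∈ T, x = 1 ∨ x = 2 := fun x hx => hmem x (by simp [hx])
    by_cases hfb : b = flp a
    · have hTne : T ≠ flpAlt b T.length := by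
        intro h
        apply hne
        simp only [List.length_cons]
        show b :: T = flpAlt a (T.length + 1)
        rw [show flpAlt a (T.length + 1) = flp a :: flpAlt (flp a) T.length from rfl,
          ← hfb, ← h]
      have h2 := ih b hb hT hTne
      have h1 : gpair fAZI a b + pot b = wv + pot a := by rw [hfb]; exact key_eq ha
      simp only [chainSum, myLast, List.length_cons]
      push_cast
      linarith
    · have hba : b = a := by
        rcases ha with rfl | rfl <;> rcases hb with rfl | rfl <;> simp_all [flp]
      have h1 : gpair fAZI a b + pot b < wv + pot a := by rw [hba]; exact key_lt ha
      have h2 := chain_le T b hb hT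
      simp only [chainSum, myLast, List.length_cons]
      push_cast
      linarith

lemma chain_eq : ∀ (k : ℕ) (a : ℕ), (a = 1 ∨ a = 2) →
    chainSum fAZI a (flpAlt a k) + pot (myLast a (flpAlt a k)) = k * wv + pot a := by
  intro k
  induction k with
  | zero => intro a _; simp [flpAlt, chainSum, myLast]
  | succ k ih =>
    intro a ha
    have h1 := key_eq ha
    have h2 := ih (flp a) (flp_mem ha)
    show chainSum fAZI a (flp a :: flpAlt (flp a) k) +
        pot (myLast a (flp a :: flpAlt (flp a) k)) = _
    simp only [chainSum, myLast]
    push_cast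
    linarith

lemma myLast_flpAlt : ∀ (k : ℕ) (a : ℕ), (a = 1 ∨ a = 2) →
    myLast a (flpAlt a k) = if k % 2 = 0 then a else flp a := by
  intro k
  induction k with
  | zero => intro a _; simp [flpAlt, myLast]
  | succ k ih =>
    intro a ha
    show myLast a (flp a :: flpAlt (flp a) k) = _
    simp only [myLast]
    rw [ih (flp a) (flp_mem ha)]
    rcases Nat.even_or_odd k with hk | hk
    · have h0 : k % 2 = 0 := Nat.even_iff.mp hk
      have h1 : (k+1) % 2 = 1 := by omega
      simp [h0, h1]
    · have h0 : k % 2 = 1 := Nat.odd_iff.mp hk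
      have h1 : (k+1) % 2 = 0 := by omega
      simp [h0, h1, flp_flp ha]

lemma flpAlt_length : ∀ (k : ℕ) (a : ℕ), (flpAlt a k).length = k := by
  intro k
  induction k with
  | zero => intro a; rfl
  | succ k ih => intro a; show (flp a :: flpAlt (flp a) k).length = k + 1; simp [ih]

lemma ofFn_alt : ∀ (m r : ℕ),
    List.ofFn (fun k : Fin m => if (k.val + r) % 2 = 0 then 1 else 2) =
      flpAlt (if r % 2 = 0 then 2 else 1) m := by
  intro m
  induction m with
  | zero => intro r; simp [flpAlt]
  | succ m ih =>
    intro r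
    rw [List.ofFn_succ]
    have htail : (fun i : Fin m => if ((i.succ : Fin (m+1)).val + r) % 2 = 0 then (1:ℕ) else 2)
        = fun i : Fin m => if (i.val + (r + 1)) % 2 = 0 then 1 else 2 := by
      funext i
      have : ((i.succ : Fin (m+1)).val + r) = i.val + (r + 1) := by
        simp [Fin.val_succ]; omega
      rw [this]
    rw [htail, ih (r + 1)]
    show _ = flp (if r % 2 = 0 then 2 else 1) ::
      flpAlt (flp (if r % 2 = 0 then 2 else 1)) m
    by_cases hr : r % 2 = 0
    · have hr1 : (r + 1) % 2 = 1 := by omega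
      simp [hr, hr1, flp]
    · have hr0 : r % 2 = 1 := by omega
      have hr1 : (r + 1) % 2 = 0 := by omega
      simp [hr, hr0, hr1, flp]

lemma goneIneq : gone fAZI 2 + potv < gone fAZI 1 := by
  rw [gone1, gone2]; unfold potv; norm_num

/-- for odd `n ≥ 5`, the unique maximizer of the augmented Zagreb
index is the alternating link vector `(1,2,1,2,…,2,1)` (position `j ∈ {3,…,n}`
is `1` iff `j` is odd, i.e. list index `k` is even). -/
theorem stmt16 :
    ∀ n : ℕ, 5 ≤ n → Odd n →
      ∀ L, ValidLinks n L →
        L ≠ List.ofFn (fun k : Fin (n - 2) => if k.val % 2 = 0 then 1 else 2) →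
        TI fAZI L <
          TI fAZI (List.ofFn (fun k : Fin (n - 2) => if k.val % 2 = 0 then 1 else 2)) := by
  intro n hn hodd L hL hne
  have hm3 : 3 ≤ n - 2 := by omega
  obtain ⟨m', hm'⟩ : ∃ m', n - 2 = m' + 1 := ⟨n - 3, by omega⟩
  have hm'even : m' % 2 = 0 := by
    rcases hodd with ⟨j, hj⟩; omega
  -- identify the alternating vector
  have haltF : List.ofFn (fun k : Fin (n - 2) => if k.val % 2 = 0 then (1:ℕ) else 2)
      = 1 :: flpAlt 1 m' := by
    have hfun : (fun k : Fin (n - 2) => if k.val % 2 = 0 then (1:ℕ) else 2)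
        = fun k : Fin (n - 2) => if (k.val + 0) % 2 = 0 then 1 else 2 := by
      funext k; simp
    rw [hfun, ofFn_alt (n - 2) 0]
    simp only [Nat.zero_mod, if_pos rfl]
    rw [hm']
    show flp 2 :: flpAlt (flp 2) m' = _
    simp [flp]
  rw [haltF] at hne ⊢
  -- TI of the alternating vector
  have hlast : myLast 1 (flpAlt 1 m') = 1 := by
    rw [myLast_flpAlt m' 1 (Or.inl rfl)]
    simp [hm'even]
  have hAltChain : chainSum fAZI 1 (flpAlt 1 m') = m' * wv := by
    have h := chain_eq m' 1 (Or.inl rfl)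
    rw [hlast] at h
    simp [pot] at h
    linarith
  have hAltTI : TI fAZI (1 :: flpAlt 1 m') = cst fAZI + gone fAZI 1 + m' * wv := by
    show cst fAZI + gone fAZI 1 + chainSum fAZI 1 (flpAlt 1 m') = _
    rw [hAltChain]
  -- decompose L
  obtain ⟨hLlen, hLmem⟩ := hL
  obtain ⟨a, T, rfl⟩ : ∃ a T, L = a :: T := by
    cases L with
    | nil => rw [hm'] at hLlen; simp at hLlen
    | cons a T => exact ⟨a, T, rfl⟩
  have hTlen : T.length = m' := by
    rw [hm'] at hLlen; simpa using hLlen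
  have ha : a = 1 ∨ a = 2 := hLmem a (by simp)
  have hTmem : ∀ x ∈ T, x = 1 ∨ x = 2 := fun x hx => hLmem x (by simp [hx])
  rw [hAltTI]
  show cst fAZI + gone fAZI a + chainSum fAZI a T < _
  rcases ha with rfl | rfl
  · -- a = 1 : tail differs from alternating
    have hTne : T ≠ flpAlt 1 T.length := by
      rw [hTlen]
      intro h
      exact hne (by rw [h])
    have h := chain_lt T 1 (Or.inl rfl) hTmem hTne
    have hp := pot_nonneg (myLast 1 T)
    rw [hTlen] at h
    have hpot1 : pot 1 = 0 := by simp [pot]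
    rw [hpot1] at h
    linarith
  · -- a = 2
    have h := chain_le T 2 (Or.inr rfl) hTmem
    have hp := pot_nonneg (myLast 2 T)
    rw [hTlen] at h
    have hpot2 : pot 2 = potv := by simp [pot]
    rw [hpot2] at h
    have := goneIneq
    linarith


end
end
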